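/- Every finite strategic game that admits an exact potential function possesses at least one pure Nash equilibrium; moreover, any maximizer of the potential function over the (finite) set of strategy profiles is a pure Nash equilibrium. -/
import Mathlib


/-- A pure Nash equilibrium: no player can unilaterally strictly increase
her payoff. -/
def IsPureNash {ι : Type*} [DecidableEq ι] {S : ι → Type*}
    (U : ι → (∀ i, S i) → ℝ) (r : ∀ i, S i) : Prop :=
  ∀ i, ∀ si' : S i, U i (Function.update r i si') ≤ U i r

theorem exists_pure_nash_of_exact_potential {ι : Type*} [Fintype ι] [DecidableEq ι]
    (S : ι → Type*) [∀ i, Fintype (S i)] [∀ i, Nonempty (S i)]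
    (U : ι → (∀ i, S i) → ℝ) (Φ : (∀ i, S i) → ℝ)
    (hpot : ∀ (r : ∀ i, S i) (i : ι) (si' : S i),
      Φ (Function.update r i si') - Φ r = U i (Function.update r i si') - U i r) :
    (∃ r : ∀ i, S i, IsPureNash U r) ∧
    (∀ rstar : ∀ i, S i, (∀ r, Φ r ≤ Φ rstar) → IsPureNash U rstar) := by
  have key : ∀ rstar : ∀ i, S i, (∀ r, Φ r ≤ Φ rstar) → IsPureNash U rstar := by
    intro rstar hmax i si'
    have h := hpot rstar i si'
    have := hmax (Function.update rstar i si')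
    linarith
  refine ⟨?_, key⟩
  obtain ⟨rstar, _, hmax⟩ := Finset.exists_max_image Finset.univ Φ ⟨Classical.arbitrary _, Finset.mem_univ _⟩
  exact ⟨rstar, key rstar fun r => hmax r (Finset.mem_univ r)⟩
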